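/- arXiv:2205.07638 — 8 statements merged into one kernel-verified Lean document; each statement's English description precedes it below -/
import Mathlib

section
/- Let d ≥ 1 and k ≥ 1 be integers with k·(1 − 1/d)^{k−1} < 1. Then every (k,d)-layered digraph contains a rainbow cycle. (Consequently the rainbow cycle number satisfies R(d) < k.) -/
/-!
Choose one vertex from every part. For a fixed part `V_i`, the choices in which the chosen
vertex of `V_i` has no out-neighbour among the other chosen vertices make up at most a fraction
`∏_{j ≠ i} (1 - 1/|V_j|) ≤ (1 - 1/d)^(k-1)` of all choices, because every vertex has an
out-neighbour in each `V_j`. By the union bound and `k (1 - 1/d)^(k-1) < 1`, some choice has every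
chosen vertex pointing to another chosen vertex. Following such out-neighbours among the `k` chosen
vertices must close a cycle, and this cycle meets every part at most once.
-/

open Finset Function

theorem Function.exists_mem_periodicPts {α : Type*} [Finite α] [Nonempty α] (f : α → α) :
    ∃ x, x ∈ periodicPts f := by
  inhabit α
  obtain ⟨m, n, hmn, h⟩ := Finite.exists_ne_map_eq_of_infinite fun n => f^[n] default
  wlog hlt : m < n generalizing m n
  · exact this n m hmn.symm h.symm (by omega)
  refine ⟨f^[m] default, mk_mem_periodicPts (n := n - m) (by omega) ?_⟩
  rw [IsPeriodicPt, IsFixedPt, ← iterate_add_apply, Nat.sub_add_cancel hlt.le]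
  exact h.symm

theorem exists_nodup_cycle_of_forall_exists_rel {α : Type*} [Finite α] [Nonempty α]
    {R : α → α → Prop} (h : ∀ a, ∃ b, R a b) :
    ∃ (v : α) (c : List α), List.IsChain R (v :: (c ++ [v])) ∧ (v :: c).Nodup := by
  choose f hf using h
  obtain ⟨x, hx⟩ := exists_mem_periodicPts f
  obtain ⟨n, hn⟩ := Nat.exists_eq_add_one_of_ne_zero (minimalPeriod_pos_of_mem_periodicPts hx).ne'
  have horbit : periodicOrbit f x = ↑(x :: (List.range n).map fun m => f^[m + 1] x) := by
    rw [periodicOrbit_def, hn, List.range_succ_eq_map, List.map_cons, List.map_map]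
    rfl
  refine ⟨x, (List.range n).map fun m => f^[m + 1] x, ?_, ?_⟩
  · have hchain := (periodicOrbit_chain' R hx).2 fun m => by
      rw [iterate_succ_apply']
      exact hf _
    rwa [horbit, Cycle.chain_coe_cons] at hchain
  · simpa only [horbit, Cycle.nodup_coe_iff] using nodup_periodicOrbit (f := f) (x := x)

section Transversal

variable {ι α : Type*} [Fintype ι] [DecidableEq ι] (s : ι → Finset α) (A : α → α → Prop)

theorem card_filter_piFinset_forall_not_rel_le [DecidableRel A] (i : ι)
    (hout : ∀ x ∈ s i, ∀ j ≠ i, ∃ u ∈ s j, A x u) :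
    #{w ∈ Fintype.piFinset s | ∀ j ≠ i, ¬A (w i) (w j)} ≤
      #(s i) * ∏ j ∈ univ.erase i, (#(s j) - 1) := by
  classical
  set t : α → ι → Finset α := fun x => update (fun j => {y ∈ s j | ¬A x y}) i {x}
  have hcover : {w ∈ Fintype.piFinset s | ∀ j ≠ i, ¬A (w i) (w j)} ⊆
      (s i).biUnion fun x => Fintype.piFinset (t x) := by
    intro w hw
    simp only [mem_filter, Fintype.mem_piFinset] at hw
    refine mem_biUnion.2 ⟨w i, hw.1 i, Fintype.mem_piFinset.2 fun j => ?_⟩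
    by_cases hj : j = i
    · subst hj
      simp [t]
    · simpa [t, hj] using ⟨hw.1 j, hw.2 j hj⟩
  have hfibre : ∀ x ∈ s i, #(Fintype.piFinset (t x)) ≤ ∏ j ∈ univ.erase i, (#(s j) - 1) := by
    intro x hx
    rw [Fintype.card_piFinset, ← mul_prod_erase univ _ (mem_univ i)]
    simp only [t, update_self, card_singleton, one_mul]
    refine prod_le_prod' fun j hj => ?_
    have hji := ne_of_mem_erase hj
    rw [update_of_ne hji]
    obtain ⟨u, hu, hxu⟩ := hout x hx j hji
    have : {y ∈ s j | ¬A x y} ⊂ s j := filter_ssubset.2 ⟨u, hu, not_not.2 hxu⟩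
    have := card_lt_card this
    omega
  calc _ ≤ _ := card_le_card hcover
    _ ≤ ∑ x ∈ s i, #(Fintype.piFinset (t x)) := card_biUnion_le
    _ ≤ ∑ _x ∈ s i, ∏ j ∈ univ.erase i, (#(s j) - 1) := sum_le_sum hfibre
    _ = _ := by rw [sum_const, smul_eq_mul]

theorem cast_sub_one_le_one_sub_inv_mul {n d : ℕ} (h1 : 1 ≤ n) (hd : n ≤ d) :
    ((n - 1 : ℕ) : ℝ) ≤ (1 - 1 / d) * n := by
  rw [Nat.cast_sub h1, Nat.cast_one, sub_mul, one_mul, one_div_mul_eq_div]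
  gcongr
  exact div_le_one_of_le₀ (by exact_mod_cast hd) (Nat.cast_nonneg d)

theorem cast_mul_prod_erase_sub_one_le {n : ι → ℕ} {d : ℕ} (h1 : ∀ j, 1 ≤ n j)
    (hd : ∀ j, n j ≤ d) (i : ι) :
    ((n i * ∏ j ∈ univ.erase i, (n j - 1) : ℕ) : ℝ) ≤
      (1 - 1 / d) ^ (Fintype.card ι - 1) * ∏ j, (n j : ℝ) := by
  rw [← mul_prod_erase univ (fun j => (n j : ℝ)) (mem_univ i), Nat.cast_mul, Nat.cast_prod]
  calc (n i : ℝ) * ∏ j ∈ univ.erase i, ((n j - 1 : ℕ) : ℝ)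
      ≤ n i * ∏ j ∈ univ.erase i, ((1 - 1 / d : ℝ) * n j) := by
        gcongr with j
        exact cast_sub_one_le_one_sub_inv_mul (h1 j) (hd j)
    _ = _ := by
        rw [prod_mul_distrib, prod_const, card_erase_of_mem (mem_univ i), card_univ]
        ring

theorem exists_mem_piFinset_forall_exists_rel {d : ℕ} (hs : ∀ i, (s i).Nonempty)
    (hsd : ∀ i, #(s i) ≤ d) (hout : ∀ i, ∀ x ∈ s i, ∀ j ≠ i, ∃ u ∈ s j, A x u)
    (hkd : (Fintype.card ι : ℝ) * (1 - 1 / d) ^ (Fintype.card ι - 1) < 1) :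
    ∃ w ∈ Fintype.piFinset s, ∀ i, ∃ j ≠ i, A (w i) (w j) := by
  classical
  by_contra! hbad
  have hcover : Fintype.piFinset s ⊆
      univ.biUnion fun i => {w ∈ Fintype.piFinset s | ∀ j ≠ i, ¬A (w i) (w j)} := by
    intro w hw
    obtain ⟨i, hi⟩ := hbad w hw
    exact mem_biUnion.2 ⟨i, mem_univ i, mem_filter.2 ⟨hw, hi⟩⟩
  have hpos : 0 < ∏ i, (#(s i) : ℝ) := prod_pos fun i _ => by exact_mod_cast (hs i).card_pos
  have hle : ∏ i, (#(s i) : ℝ) ≤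
      Fintype.card ι * (1 - 1 / d) ^ (Fintype.card ι - 1) * ∏ i, (#(s i) : ℝ) := by
    calc ∏ i, (#(s i) : ℝ) = #(Fintype.piFinset s) := by
          rw [Fintype.card_piFinset, Nat.cast_prod]
      _ ≤ ((∑ i, #(s i) * ∏ j ∈ univ.erase i, (#(s j) - 1) : ℕ) : ℝ) := by
          gcongr
          exact (card_le_card hcover).trans <| card_biUnion_le.trans <|
            sum_le_sum fun i _ => card_filter_piFinset_forall_not_rel_le s A i (hout i)
      _ ≤ ∑ _i : ι, (1 - 1 / d : ℝ) ^ (Fintype.card ι - 1) * ∏ i, (#(s i) : ℝ) := by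
          rw [Nat.cast_sum]
          exact sum_le_sum fun i _ =>
            cast_mul_prod_erase_sub_one_le (fun j => (hs j).card_pos) hsd i
      _ = _ := by rw [sum_const, card_univ, nsmul_eq_mul, mul_assoc]
  linarith [mul_lt_mul_of_pos_right hkd hpos]

end Transversal

theorem rainbow_cycle_of_layered_digraph_general
    {V : Type*} [Fintype V] {k d : ℕ}
    (hk : 1 ≤ k)
    (hkd : (k : ℝ) * (1 - 1 / (d : ℝ)) ^ (k - 1) < 1)
    (A : V → V → Prop) (part : V → Fin k)
    (hne : ∀ i : Fin k, ∃ x : V, part x = i)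
    (hsize : ∀ i : Fin k, (Finset.univ.filter fun x : V => part x = i).card ≤ d)
    (hout : ∀ x : V, ∀ j : Fin k, j ≠ part x → ∃ u : V, part u = j ∧ A x u) :
    ∃ (v : V) (c : List V), c ≠ [] ∧ List.Chain A v (c ++ [v]) ∧
      ((v :: c).map part).Nodup := by
  classical
  obtain ⟨w, hw, hadj⟩ := exists_mem_piFinset_forall_exists_rel
    (fun i => univ.filter fun x : V => part x = i) A
    (fun i => by simpa [Finset.Nonempty] using hne i) hsize
    (fun i x hx j hj => by simpa using hout x j ((mem_filter.1 hx).2 ▸ hj))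
    (by simpa using hkd)
  have hpart : ∀ i, part (w i) = i := by simpa using hw
  have : Nonempty (Fin k) := ⟨⟨0, hk⟩⟩
  obtain ⟨v, c, hchain, hnodup⟩ := exists_nodup_cycle_of_forall_exists_rel hadj
  refine ⟨w v, c.map w, ?_, ?_, ?_⟩
  · rw [Ne, List.map_eq_nil_iff]
    rintro rfl
    simp at hchain
  · have hmap := List.isChain_map_of_isChain w (fun _ _ h => h.2) hchain
    rwa [List.map_cons, List.map_append, List.map_singleton] at hmap
  · simpa [hpart, Function.comp_def] using hnodup

/-- If `k (1 - 1/d)^(k-1) < 1`, then every `(k,d)`-layered digraph contains a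
rainbow cycle: a directed cycle (given by a start vertex `v` and a nonempty list
`c` of further vertices, with consecutive edges and an edge back to `v`) that
contains at most one vertex from each part. Consequently `R(d) < k`. -/
theorem rainbow_cycle_of_layered_digraph
    {V : Type*} [Fintype V] [DecidableEq V] {k d : ℕ}
    (hd : 1 ≤ d) (hk : 1 ≤ k)
    (hkd : (k : ℝ) * (1 - 1 / (d : ℝ)) ^ (k - 1) < 1)
    (A : V → V → Prop) (part : V → Fin k)
    (hne : ∀ i : Fin k, ∃ x : V, part x = i)
    (hsize : ∀ i : Fin k, (Finset.univ.filter fun x : V => part x = i).card ≤ d)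
    (hin : ∀ x : V, ∀ j : Fin k, j ≠ part x → ∃ u : V, part u = j ∧ A u x)
    (hout : ∀ x : V, ∀ j : Fin k, j ≠ part x → ∃ u : V, part u = j ∧ A x u) :
    ∃ (v : V) (c : List V), c ≠ [] ∧ List.Chain A v (c ++ [v]) ∧
      ((v :: c).map part).Nodup :=
  rainbow_cycle_of_layered_digraph_general hk hkd A part hne hsize hout
end

section
/- For every integer d ≥ 2 and every integer k with k ≥ 4·d·ln d, every (k,d)-layered digraph contains a rainbow cycle; in particular the rainbow cycle number satisfies R(d) < 4·d·ln d, so R(d) = O(d log d). -/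
open Finset Function Real

/-!
Choose one vertex in each part (a transversal). If every chosen vertex had an out-neighbour
among the chosen ones, following such out-neighbours would close a cycle through distinct
parts, i.e. a rainbow cycle. So, in a digraph without rainbow cycles, every transversal has
a sink. Fix for each vertex `v` one out-neighbour `w v j` in every other part `j`: a
transversal with sink `v` in part `i` avoids `w v j` in every part `j ≠ i`, so there are at
most `∑ᵢ |Vᵢ| ∏_{j ≠ i} (|Vⱼ| - 1) ≤ k (1 - 1/d)^(k-1) ∏ⱼ |Vⱼ|` transversals in total.
Hence `k (1 - 1/d)^(k-1) ≥ 1`, which fails once `k ≥ 4 d ln d`, because then `d ln k < k - 1`.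
-/

theorem Function.exists_iterate_mem_periodicPts {α : Type*} [Finite α] (f : α → α) (x : α) :
    ∃ n, f^[n] x ∈ periodicPts f := by
  obtain ⟨m, n, hmn, heq⟩ := Finite.exists_ne_map_eq_of_infinite (f^[·] x)
  wlog hlt : m < n generalizing m n
  · exact this n m hmn.symm heq.symm (by omega)
  refine ⟨m, mk_mem_periodicPts (Nat.sub_pos_of_lt hlt) ?_⟩
  rw [IsPeriodicPt, IsFixedPt, ← iterate_add_apply, Nat.sub_add_cancel hlt.le]
  exact heq.symm

theorem exists_cycle_of_forall_exists_ne {ι : Type*} [Finite ι] [Nonempty ι]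
    (R : ι → ι → Prop) (h : ∀ i, ∃ j ≠ i, R i j) :
    ∃ (v : ι) (c : List ι), c ≠ [] ∧ (v :: (c ++ [v])).IsChain R ∧ (v :: c).Nodup := by
  choose g hg hR using h
  obtain ⟨n, hy⟩ := exists_iterate_mem_periodicPts g (Classical.arbitrary ι)
  set y := g^[n] (Classical.arbitrary ι)
  obtain ⟨p, hp⟩ : ∃ p, minimalPeriod g y = p + 1 :=
    Nat.exists_eq_add_one.mpr (minimalPeriod_pos_of_mem_periodicPts hy)
  have horbit : periodicOrbit g y = ↑(y :: (List.range p).map fun m => g^[m + 1] y) := by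
    rw [periodicOrbit_def, hp, List.range_succ_eq_map, List.map_cons, List.map_map]
    rfl
  refine ⟨y, (List.range p).map fun m => g^[m + 1] y, ?_, ?_, ?_⟩
  · have : p ≠ 0 := by
      rintro rfl
      exact hg y (minimalPeriod_eq_one_iff_isFixedPt.mp hp)
    simpa using this
  · have := (periodicOrbit_chain' R hy).mpr fun m => by
      rw [iterate_succ_apply']; exact hR _
    rwa [horbit, Cycle.chain_coe_cons] at this
  · have := nodup_periodicOrbit (f := g) (x := y)
    rwa [horbit, Cycle.nodup_coe_iff] at this

theorem exists_rainbow_cycle_of_transversal {ι V : Type*} [Finite ι] [Nonempty ι]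
    (A : V → V → Prop) (part : V → ι) (f : ι → V) (hf : ∀ i, part (f i) = i)
    (h : ∀ i, ∃ j ≠ i, A (f i) (f j)) :
    ∃ (v : V) (c : List V), c ≠ [] ∧ (v :: (c ++ [v])).IsChain A ∧
      ((v :: c).map part).Nodup := by
  obtain ⟨i, c, hc, hchain, hnodup⟩ := exists_cycle_of_forall_exists_ne _ h
  refine ⟨f i, c.map f, by simpa using hc, ?_, ?_⟩
  · simpa using (List.isChain_map f).mpr hchain
  · have hpart : part ∘ f = id := funext hf
    simpa [hpart, hf] using hnodup

theorem prod_card_le_of_forall_exists_sink {ι α : Type*} [Fintype ι] [DecidableEq ι]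
    [DecidableEq α] (S : ι → Finset α) (w : α → ι → α)
    (hw : ∀ i, ∀ v ∈ S i, ∀ j ≠ i, w v j ∈ S j)
    (hsink : ∀ f ∈ Fintype.piFinset S, ∃ i, ∀ j ≠ i, f j ≠ w (f i) j) :
    ∏ i, #(S i) ≤ ∑ i, #(S i) * ∏ j ∈ univ.erase i, (#(S j) - 1) := by
  set T : ι → α → ι → Finset α := fun i v => update (fun j => (S j).erase (w v j)) i {v}
  have hsub : Fintype.piFinset S ⊆
      univ.biUnion fun i => (S i).biUnion fun v => Fintype.piFinset (T i v) := by
    intro f hf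
    obtain ⟨i, hi⟩ := hsink f hf
    rw [Fintype.mem_piFinset] at hf
    simp only [mem_biUnion, mem_univ, true_and, Fintype.mem_piFinset]
    refine ⟨i, f i, hf i, fun j => ?_⟩
    rcases eq_or_ne j i with rfl | hji
    · simp [T]
    · simp [T, hji, hi j hji, hf j]
  have hcard : ∀ i, ∀ v ∈ S i,
      #(Fintype.piFinset (T i v)) = ∏ j ∈ univ.erase i, (#(S j) - 1) := by
    intro i v hv
    rw [Fintype.card_piFinset]
    simp only [T, apply_update (fun _ => Finset.card)]
    rw [prod_update_of_mem (mem_univ i), card_singleton, one_mul, sdiff_singleton_eq_erase]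
    exact prod_congr rfl fun j hj => card_erase_of_mem (hw i v hv j (ne_of_mem_erase hj))
  calc ∏ i, #(S i) = #(Fintype.piFinset S) := (Fintype.card_piFinset S).symm
    _ ≤ _ := card_le_card hsub
    _ ≤ ∑ i, ∑ v ∈ S i, #(Fintype.piFinset (T i v)) :=
      card_biUnion_le.trans (sum_le_sum fun i _ => card_biUnion_le)
    _ = _ := sum_congr rfl fun i _ => by rw [sum_congr rfl (hcard i), sum_const, smul_eq_mul]

theorem Nat.cast_sub_one_le_mul_one_sub_inv {n d : ℕ} (h : n ≤ d) :
    ((n - 1 : ℕ) : ℝ) ≤ n * (1 - (d : ℝ)⁻¹) := by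
  rcases Nat.eq_zero_or_pos n with rfl | hn
  · simp
  have hnd : (n : ℝ) / d ≤ 1 := div_le_one_of_le₀ (by exact_mod_cast h) (by positivity)
  rw [Nat.cast_sub hn, mul_sub, mul_one, ← div_eq_mul_inv, Nat.cast_one]
  linarith

theorem sum_mul_prod_erase_sub_one_le {ι : Type*} [Fintype ι] [DecidableEq ι] (n : ι → ℕ)
    {d : ℕ} (hn : ∀ i, n i ≤ d) :
    ((∑ i, n i * ∏ j ∈ univ.erase i, (n j - 1) : ℕ) : ℝ) ≤
      Fintype.card ι * (1 - (d : ℝ)⁻¹) ^ (Fintype.card ι - 1) * ∏ i, (n i : ℝ) := by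
  set q : ℝ := 1 - (d : ℝ)⁻¹
  have hq : 0 ≤ q := sub_nonneg.mpr (Nat.cast_inv_le_one d)
  push_cast
  calc ∑ i, (n i : ℝ) * ∏ j ∈ univ.erase i, ((n j - 1 : ℕ) : ℝ)
      ≤ ∑ i, (n i : ℝ) * ∏ j ∈ univ.erase i, ((n j : ℝ) * q) :=
        sum_le_sum fun i _ => mul_le_mul_of_nonneg_left
          (prod_le_prod (fun _ _ => by positivity)
            fun j _ => Nat.cast_sub_one_le_mul_one_sub_inv (hn j)) (by positivity)
    _ = ∑ _i : ι, q ^ (Fintype.card ι - 1) * ∏ i, (n i : ℝ) := by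
        refine sum_congr rfl fun i _ => ?_
        rw [prod_mul_distrib, prod_const, card_erase_of_mem (mem_univ i), card_univ,
          ← mul_assoc, mul_prod_erase univ (fun j => (n j : ℝ)) (mem_univ i), mul_comm]
    _ = _ := by rw [sum_const, card_univ, nsmul_eq_mul, mul_assoc]

theorem one_le_card_mul_one_sub_inv_pow_of_forall_exists_sink {ι α : Type*} [Fintype ι]
    [DecidableEq ι] [DecidableEq α] {d : ℕ} (S : ι → Finset α) (w : α → ι → α)
    (hS_pos : ∀ i, 0 < #(S i)) (hS_le : ∀ i, #(S i) ≤ d)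
    (hw : ∀ i, ∀ v ∈ S i, ∀ j ≠ i, w v j ∈ S j)
    (hsink : ∀ f ∈ Fintype.piFinset S, ∃ i, ∀ j ≠ i, f j ≠ w (f i) j) :
    1 ≤ Fintype.card ι * (1 - (d : ℝ)⁻¹) ^ (Fintype.card ι - 1) := by
  have hprod_pos : (0 : ℝ) < ∏ i, (#(S i) : ℝ) :=
    prod_pos fun i _ => by exact_mod_cast hS_pos i
  have hle : ∏ i, (#(S i) : ℝ) ≤
      Fintype.card ι * (1 - (d : ℝ)⁻¹) ^ (Fintype.card ι - 1) * ∏ i, (#(S i) : ℝ) :=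
    le_trans (by exact_mod_cast prod_card_le_of_forall_exists_sink S w hw hsink)
      (sum_mul_prod_erase_sub_one_le _ hS_le)
  exact le_of_mul_le_mul_right (by rwa [one_mul]) hprod_pos

theorem pos_of_four_mul_log_le {d k : ℕ} (hd : 2 ≤ d) (hk : 4 * (d : ℝ) * log d ≤ k) :
    (0 : ℝ) < k := by
  have := log_pos (by exact_mod_cast hd : (1 : ℝ) < d)
  exact lt_of_lt_of_le (by positivity) hk

theorem mul_log_lt_sub_one_of_four_mul_log_le {d k : ℕ} (hd : 2 ≤ d)
    (hk : 4 * (d : ℝ) * log d ≤ k) : d * log k < k - 1 := by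
  have hd2 : (2 : ℝ) ≤ d := by exact_mod_cast hd
  have hk0 := pos_of_four_mul_log_le hd hk
  -- `log x ≤ x - 1` at `x = k / d²`
  have hlog : log k - 2 * log d ≤ k / d ^ 2 - 1 := by
    have := log_le_sub_one_of_pos (x := k / d ^ 2) (by positivity)
    rwa [log_div hk0.ne' (by positivity), log_pow, Nat.cast_ofNat] at this
  have hkd : (k : ℝ) / d ≤ k / 2 := div_le_div_of_nonneg_left hk0.le two_pos hd2
  have : d * log k ≤ k / d + 2 * d * log d - d := by
    have := mul_le_mul_of_nonneg_left hlog (by positivity : (0 : ℝ) ≤ d)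
    field_simp at this ⊢
    linarith
  linarith

theorem natCast_mul_one_sub_inv_pow_lt_one {d k : ℕ} (hd : 2 ≤ d)
    (hk : 4 * (d : ℝ) * log d ≤ k) : k * (1 - (d : ℝ)⁻¹) ^ (k - 1) < 1 := by
  have hd2 : (2 : ℝ) ≤ d := by exact_mod_cast hd
  have hk0 := pos_of_four_mul_log_le hd hk
  have hk1 : 1 ≤ k := by exact_mod_cast hk0
  have hq : 0 < 1 - (d : ℝ)⁻¹ := sub_pos.mpr (inv_lt_one_of_one_lt₀ (by linarith))
  have hlogq : log (1 - (d : ℝ)⁻¹) ≤ -(d : ℝ)⁻¹ := by linarith [log_le_sub_one_of_pos hq]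
  have hmain := mul_log_lt_sub_one_of_four_mul_log_le hd hk
  rw [← log_neg_iff (by positivity), log_mul hk0.ne' (by positivity), log_pow,
    Nat.cast_sub hk1, Nat.cast_one]
  have : ((k : ℝ) - 1) * log (1 - (d : ℝ)⁻¹) ≤ ((k : ℝ) - 1) * -(d : ℝ)⁻¹ :=
    mul_le_mul_of_nonneg_left hlogq (sub_nonneg.mpr (by exact_mod_cast hk1))
  have : log k < ((k : ℝ) - 1) * (d : ℝ)⁻¹ := by
    rw [← div_eq_mul_inv, lt_div_iff₀ (by positivity)]
    linarith
  linarith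

theorem rainbow_cycle_of_layered_digraph_log_bound_general
    {V : Type*} [Fintype V] {k d : ℕ}
    (hd : 2 ≤ d)
    (hk : 4 * (d : ℝ) * Real.log d ≤ (k : ℝ))
    (A : V → V → Prop) (part : V → Fin k)
    (hne : ∀ i : Fin k, ∃ x : V, part x = i)
    (hsize : ∀ i : Fin k, (Finset.univ.filter fun x : V => part x = i).card ≤ d)
    (hout : ∀ x : V, ∀ j : Fin k, j ≠ part x → ∃ u : V, part u = j ∧ A x u) :
    ∃ (v : V) (c : List V), c ≠ [] ∧ List.Chain A v (c ++ [v]) ∧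
      ((v :: c).map part).Nodup := by
  classical
  by_contra hno_cycle
  have : Nonempty (Fin k) :=
    Fin.pos_iff_nonempty.mp (by exact_mod_cast pos_of_four_mul_log_le hd hk)
  set S : Fin k → Finset V := fun i => {x | part x = i}
  have hS : ∀ {x i}, x ∈ S i ↔ part x = i := by simp [S]
  obtain ⟨w, hw⟩ :
      ∃ w : V → Fin k → V, ∀ x j, j ≠ part x → part (w x j) = j ∧ A x (w x j) :=
    ⟨fun x j => if hj : j = part x then x else (hout x j hj).choose,
      fun x j hj => by simpa [hj] using (hout x j hj).choose_spec⟩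
  have hsink : ∀ f ∈ Fintype.piFinset S, ∃ i, ∀ j ≠ i, f j ≠ w (f i) j := by
    intro f hf
    have hpart : ∀ i, part (f i) = i := fun i => hS.mp (Fintype.mem_piFinset.mp hf i)
    by_contra! hno_sink
    refine hno_cycle (exists_rainbow_cycle_of_transversal A part f hpart fun i => ?_)
    obtain ⟨j, hji, hj⟩ := hno_sink i
    exact ⟨j, hji, hj ▸ (hw (f i) j (by rwa [hpart])).2⟩
  have hbound := one_le_card_mul_one_sub_inv_pow_of_forall_exists_sink S w
    (fun i => card_pos.mpr ((hne i).imp fun _ => hS.mpr)) hsize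
    (fun i v hv j hj => hS.mpr (hw v j (hS.mp hv ▸ hj)).1) hsink
  rw [Fintype.card_fin] at hbound
  exact (natCast_mul_one_sub_inv_pow_lt_one hd hk).not_ge hbound

/-- For every `d ≥ 2` and every `k ≥ 4 d ln d`, every `(k,d)`-layered digraph
contains a rainbow cycle: a directed cycle (given by a start vertex `v` and a
nonempty list `c` of further vertices, with consecutive edges and an edge back
to `v`) containing at most one vertex from each part. In particular,
`R(d) < 4 d ln d`, so `R(d) = O(d log d)`. -/
theorem rainbow_cycle_of_layered_digraph_log_bound
    {V : Type*} [Fintype V] [DecidableEq V] {k d : ℕ}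
    (hd : 2 ≤ d)
    (hk : 4 * (d : ℝ) * Real.log d ≤ (k : ℝ))
    (A : V → V → Prop) (part : V → Fin k)
    (hne : ∀ i : Fin k, ∃ x : V, part x = i)
    (hsize : ∀ i : Fin k, (Finset.univ.filter fun x : V => part x = i).card ≤ d)
    (hin : ∀ x : V, ∀ j : Fin k, j ≠ part x → ∃ u : V, part u = j ∧ A u x)
    (hout : ∀ x : V, ∀ j : Fin k, j ≠ part x → ∃ u : V, part u = j ∧ A x u) :
    ∃ (v : V) (c : List V), c ≠ [] ∧ List.Chain A v (c ++ [v]) ∧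
      ((v :: c).map part).Nodup :=
  rainbow_cycle_of_layered_digraph_log_bound_general hd hk A part hne hsize hout
end

section
/- Let M be a finite set of goods. Every nice-cancelable valuation v : 2^M → ℝ_{≥0} is MMS-feasible. -/
/-- A valuation `v` is nice-cancelable: for every `S, T ⊆ M` and every
`g ∈ M \ (S ∪ T)`, `v (S ∪ {g}) > v (T ∪ {g})` implies `v S > v T`. -/
def NiceCancelable {α : Type*} [DecidableEq α] (M : Finset α) (v : Finset α → ℝ) : Prop :=
  ∀ S T : Finset α, S ⊆ M → T ⊆ M → ∀ g ∈ M, g ∉ S ∪ T →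
    v (insert g S) > v (insert g T) → v S > v T

/-- A valuation `v` is MMS-feasible: for every subset `S ⊆ M` and every pair of
2-partitions `(A₁, A₂)` and `(B₁, B₂)` of `S`,
`max (v B₁) (v B₂) ≥ min (v A₁) (v A₂)`. -/
def MMSFeasible {α : Type*} [DecidableEq α] (M : Finset α) (v : Finset α → ℝ) : Prop :=
  ∀ S : Finset α, S ⊆ M →
    ∀ A₁ A₂ B₁ B₂ : Finset α,
      Disjoint A₁ A₂ → A₁ ∪ A₂ = S →
      Disjoint B₁ B₂ → B₁ ∪ B₂ = S →
      min (v A₁) (v A₂) ≤ max (v B₁) (v B₂)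

/-!
Suppose `v B₁ < v A₁` and `v B₂ < v A₂` for two 2-partitions of the same set. Nice
cancelability lets us remove the common goods `A₁ ∩ B₁` from the first inequality and
`A₂ ∩ B₂` from the second one. What remains are the crossing parts: the first inequality
becomes `v (A₂ ∩ B₁) < v (A₁ ∩ B₂)` and the second one its reverse, a contradiction.
-/

namespace NiceCancelable

variable {α : Type*} [DecidableEq α] {M : Finset α} {v : Finset α → ℝ}

theorem erase_lt_erase (hv : NiceCancelable M v) {S T : Finset α} (hS : S ⊆ M) (hT : T ⊆ M)
    {g : α} (hgS : g ∈ S) (hgT : g ∈ T) (hlt : v T < v S) :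
    v (T.erase g) < v (S.erase g) :=
  hv _ _ ((S.erase_subset g).trans hS) ((T.erase_subset g).trans hT) g (hS hgS)
    (by simp) (by rwa [Finset.insert_erase hgS, Finset.insert_erase hgT])

theorem sdiff_lt_sdiff_of_subset (hv : NiceCancelable M v) {S T C : Finset α}
    (hS : S ⊆ M) (hT : T ⊆ M) (hCS : C ⊆ S) (hCT : C ⊆ T) (hlt : v T < v S) :
    v (T \ C) < v (S \ C) := by
  induction C using Finset.induction_on with
  | empty => simpa using hlt
  | insert g C hgC ih =>
    rw [Finset.insert_subset_iff] at hCS hCT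
    rw [Finset.sdiff_insert, Finset.sdiff_insert]
    exact hv.erase_lt_erase (Finset.sdiff_subset.trans hS) (Finset.sdiff_subset.trans hT)
      (Finset.mem_sdiff.2 ⟨hCS.1, hgC⟩) (Finset.mem_sdiff.2 ⟨hCT.1, hgC⟩)
      (ih hCS.2 hCT.2)

theorem sdiff_lt_sdiff (hv : NiceCancelable M v) {S T : Finset α} (hS : S ⊆ M) (hT : T ⊆ M)
    (hlt : v T < v S) : v (T \ S) < v (S \ T) := by
  simpa [Finset.sdiff_inter_self_left, Finset.sdiff_inter_self_right] using
    hv.sdiff_lt_sdiff_of_subset hS hT Finset.inter_subset_left Finset.inter_subset_right hlt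

end NiceCancelable

theorem Finset.sdiff_eq_sdiff_of_union_eq_union {α : Type*} [DecidableEq α]
    {A₁ A₂ B₁ B₂ : Finset α} (hA : Disjoint A₁ A₂) (hB : Disjoint B₁ B₂)
    (hAB : A₁ ∪ A₂ = B₁ ∪ B₂) : A₁ \ B₁ = B₂ \ A₂ := by
  ext x
  have hx := congrArg (x ∈ ·) hAB
  simp only [Finset.mem_union, eq_iff_iff] at hx
  have hxA : x ∈ A₁ → x ∉ A₂ := fun h ↦ Finset.disjoint_left.1 hA h
  have hxB : x ∈ B₁ → x ∉ B₂ := fun h ↦ Finset.disjoint_left.1 hB h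
  simp only [Finset.mem_sdiff]
  tauto

theorem mmsFeasible_of_niceCancelable_general
    {α : Type*} [DecidableEq α] (M : Finset α) (v : Finset α → ℝ)
    (hnc : NiceCancelable M v) :
    MMSFeasible M v := by
  intro S hS A₁ A₂ B₁ B₂ hA hAu hB hBu
  by_contra! h
  have hA₁ : A₁ ⊆ M := (hAu ▸ Finset.subset_union_left).trans hS
  have hA₂ : A₂ ⊆ M := (hAu ▸ Finset.subset_union_right).trans hS
  have hB₁ : B₁ ⊆ M := (hBu ▸ Finset.subset_union_left).trans hS
  have hB₂ : B₂ ⊆ M := (hBu ▸ Finset.subset_union_right).trans hS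
  have h₁ : v B₁ < v A₁ := (le_max_left _ _).trans_lt (h.trans_le (min_le_left _ _))
  have h₂ : v B₂ < v A₂ := (le_max_right _ _).trans_lt (h.trans_le (min_le_right _ _))
  have cross₁ : v (B₁ \ A₁) < v (A₁ \ B₁) := hnc.sdiff_lt_sdiff hA₁ hB₁ h₁
  have cross₂ : v (B₂ \ A₂) < v (A₂ \ B₂) := hnc.sdiff_lt_sdiff hA₂ hB₂ h₂
  have hAB : A₁ ∪ A₂ = B₁ ∪ B₂ := hAu.trans hBu.symm
  rw [Finset.sdiff_eq_sdiff_of_union_eq_union hA hB hAB,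
    Finset.sdiff_eq_sdiff_of_union_eq_union hB hA hAB.symm] at cross₁
  exact cross₁.asymm cross₂

/-- Every nice-cancelable nonnegative valuation is MMS-feasible. -/
theorem mmsFeasible_of_niceCancelable
    {α : Type*} [DecidableEq α] (M : Finset α) (v : Finset α → ℝ)
    (hnonneg : ∀ S : Finset α, S ⊆ M → 0 ≤ v S)
    (hnc : NiceCancelable M v) :
    MMSFeasible M v :=
  mmsFeasible_of_niceCancelable_general M v hnc
end

section
/- Let M be a finite set of goods, let v_1 : 2^M → ℝ_{≥0} be an MMS-feasible valuation and let v_2 : 2^M → ℝ_{≥0} be any valuation. Then there exists a partition (X_1, X_2) of M with v_1(X_1) ≥ MMS_1(2, M) and v_2(X_2) ≥ MMS_2(2, M), where MMS_i(2, M) denotes the maximum over all partitions (A_1, A_2) of M into two (possibly empty) parts of min(v_i(A_1), v_i(A_2)). -/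
theorem exists_maximin_partition {α β : Type*} [DecidableEq α] [LinearOrder β]
    (M : Finset α) (v : Finset α → β) :
    ∃ B₁ B₂ : Finset α, Disjoint B₁ B₂ ∧ B₁ ∪ B₂ = M ∧
      ∀ A₁ A₂ : Finset α, Disjoint A₁ A₂ → A₁ ∪ A₂ = M →
        min (v A₁) (v A₂) ≤ min (v B₁) (v B₂) := by
  obtain ⟨T, hT, hT_max⟩ := M.powerset.exists_max_image
    (fun S => min (v S) (v (M \ S))) ⟨∅, M.empty_mem_powerset⟩
  refine ⟨T, M \ T, Finset.disjoint_sdiff,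
    Finset.union_sdiff_of_subset (Finset.mem_powerset.mp hT), fun A₁ A₂ hd hu => ?_⟩
  have hA₂ : A₂ = M \ A₁ := by rw [← hu, Finset.union_sdiff_cancel_left hd]
  rw [hA₂]
  exact hT_max A₁ (Finset.mem_powerset.mpr (hu ▸ Finset.subset_union_left))

theorem mms_allocation_two_agents_general
    {α : Type*} [DecidableEq α] (M : Finset α) (v₁ v₂ : Finset α → ℝ)
    (hmms : MMSFeasible M v₁) :
    ∃ X₁ X₂ : Finset α, Disjoint X₁ X₂ ∧ X₁ ∪ X₂ = M ∧
      (∀ A₁ A₂ : Finset α, Disjoint A₁ A₂ → A₁ ∪ A₂ = M →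
        min (v₁ A₁) (v₁ A₂) ≤ v₁ X₁) ∧
      (∀ A₁ A₂ : Finset α, Disjoint A₁ A₂ → A₁ ∪ A₂ = M →
        min (v₂ A₁) (v₂ A₂) ≤ v₂ X₂) := by
  obtain ⟨B₁, B₂, hd, hu, hB⟩ := exists_maximin_partition M v₂
  have h_mms₁ : ∀ A₁ A₂ : Finset α, Disjoint A₁ A₂ → A₁ ∪ A₂ = M →
      min (v₁ A₁) (v₁ A₂) ≤ max (v₁ B₁) (v₁ B₂) := fun A₁ A₂ hA hA' =>
    hmms M subset_rfl A₁ A₂ B₁ B₂ hA hA' hd hu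
  rcases le_total (v₁ B₂) (v₁ B₁) with h | h
  · refine ⟨B₁, B₂, hd, hu, fun A₁ A₂ hA hA' => ?_, fun A₁ A₂ hA hA' => ?_⟩
    · exact (h_mms₁ A₁ A₂ hA hA').trans (max_le le_rfl h)
    · exact (hB A₁ A₂ hA hA').trans (min_le_right _ _)
  · refine ⟨B₂, B₁, hd.symm, Finset.union_comm B₁ B₂ ▸ hu,
      fun A₁ A₂ hA hA' => ?_, fun A₁ A₂ hA hA' => ?_⟩
    · exact (h_mms₁ A₁ A₂ hA hA').trans (max_le h le_rfl)
    · exact (hB A₁ A₂ hA hA').trans (min_le_left _ _)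

/-- If agent 1 has an MMS-feasible valuation and agent 2 has any (nonnegative)
valuation, then there is a 2-partition `(X₁, X₂)` of `M` giving each agent at
least her maximin share: `v i (X i)` is at least `min (v i A₁) (v i A₂)` for
every 2-partition `(A₁, A₂)` of `M`. -/
theorem mms_allocation_two_agents
    {α : Type*} [DecidableEq α] (M : Finset α) (v₁ v₂ : Finset α → ℝ)
    (hnn₁ : ∀ S : Finset α, S ⊆ M → 0 ≤ v₁ S)
    (hnn₂ : ∀ S : Finset α, S ⊆ M → 0 ≤ v₂ S)
    (hmms : MMSFeasible M v₁) :
    ∃ X₁ X₂ : Finset α, Disjoint X₁ X₂ ∧ X₁ ∪ X₂ = M ∧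
      (∀ A₁ A₂ : Finset α, Disjoint A₁ A₂ → A₁ ∪ A₂ = M →
        min (v₁ A₁) (v₁ A₂) ≤ v₁ X₁) ∧
      (∀ A₁ A₂ : Finset α, Disjoint A₁ A₂ → A₁ ∪ A₂ = M →
        min (v₂ A₁) (v₂ A₂) ≤ v₂ X₂) :=
  mms_allocation_two_agents_general M v₁ v₂ hmms
end

section
/- Let M = {g_1, …, g_m} be a finite set of goods, let v_1, …, v_n : 2^M → ℝ_{≥0} be valuations, let δ = min over agents i and subsets S, T ⊆ M with v_i(S) ≠ v_i(T) of |v_i(S) − v_i(T)|, let ε > 0 satisfy ε·2^{m+1} < δ, and define v'_i(S) = v_i(S) + ε·Σ_{g_j ∈ S} 2^j. Then: (1) the perturbed instance is non-degenerate, i.e., for every agent i and all S ≠ T ⊆ M, v'_i(S) ≠ v'_i(T); and (2) every partition X = (X_1, …, X_n) of M that is an EFX allocation with respect to the valuations v'_1, …, v'_n is also an EFX allocation with respect to v_1, …, v_n. -/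
/-!
The perturbation `ε · Σ_{j ∈ S} 2^(j+1)` is `ε` times the binary number with digits `S`: it is
injective in `S` and lies in `[0, ε · 2^(m+1))`. So two perturbed values differ by less than
`ε · 2^(m+1) < δ` from the original difference, which therefore vanishes whenever the perturbed
values tie or are inverted; in the first case the binary numbers, hence the sets, coincide.
-/

/-- The perturbed valuation `v'ᵢ(S) = vᵢ(S) + ε · Σ_{gⱼ ∈ S} 2^j`, where goods
are `g₁, …, g_m`, modeled as `Fin m` with good `gⱼ` carrying weight `2^(j.val+1)`. -/
noncomputable def perturbedVal {m : ℕ} (v : Finset (Fin m) → ℝ) (ε : ℝ) :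
    Finset (Fin m) → ℝ :=
  fun S => v S + ε * ∑ j ∈ S, (2 : ℝ) ^ ((j : ℕ) + 1)

open Finset

section

variable {m : ℕ}

noncomputable def perturbationWeight (S : Finset (Fin m)) : ℝ :=
  ∑ j ∈ S, (2 : ℝ) ^ ((j : ℕ) + 1)

lemma perturbedVal_eq (v : Finset (Fin m) → ℝ) (ε : ℝ) (S : Finset (Fin m)) :
    perturbedVal v ε S = v S + ε * perturbationWeight S := rfl

lemma perturbationWeight_eq_cast_geomSum (S : Finset (Fin m)) :
    perturbationWeight S =
      ((∑ k ∈ S.map ((Fin.succEmb m).trans Fin.valEmbedding), 2 ^ k : ℕ) : ℝ) := by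
  simp [perturbationWeight]

lemma perturbationWeight_nonneg (S : Finset (Fin m)) : 0 ≤ perturbationWeight S :=
  sum_nonneg fun _ _ => by positivity

lemma perturbationWeight_lt (S : Finset (Fin m)) : perturbationWeight S < 2 ^ (m + 1) := by
  rw [perturbationWeight_eq_cast_geomSum]
  exact_mod_cast Nat.geomSum_lt le_rfl (by simp)

lemma perturbationWeight_injective : Function.Injective (perturbationWeight (m := m)) := by
  intro S T h
  rw [perturbationWeight_eq_cast_geomSum, perturbationWeight_eq_cast_geomSum, Nat.cast_inj] at h
  exact map_injective _ (geomSum_injective le_rfl h)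

lemma abs_mul_perturbationWeight_sub_lt {ε : ℝ} (hε : 0 < ε) (S T : Finset (Fin m)) :
    |ε * perturbationWeight S - ε * perturbationWeight T| < ε * 2 ^ (m + 1) := by
  rw [← mul_sub, abs_mul, abs_of_pos hε]
  exact mul_lt_mul_of_pos_left (abs_sub_lt_of_nonneg_of_lt (perturbationWeight_nonneg S)
    (perturbationWeight_lt S) (perturbationWeight_nonneg T) (perturbationWeight_lt T)) hε

variable {v : Finset (Fin m) → ℝ} {δ ε : ℝ}

lemma eq_of_abs_sub_le_abs_perturbation_sub (hδ : ∀ S T, v S ≠ v T → δ ≤ |v S - v T|)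
    (hε : 0 < ε) (hεδ : ε * 2 ^ (m + 1) < δ) {S T : Finset (Fin m)}
    (h : |v S - v T| ≤ |ε * perturbationWeight S - ε * perturbationWeight T|) : v S = v T := by
  by_contra hne
  linarith [hδ S T hne, abs_mul_perturbationWeight_sub_lt hε S T]

lemma perturbedVal_injective (hδ : ∀ S T, v S ≠ v T → δ ≤ |v S - v T|)
    (hε : 0 < ε) (hεδ : ε * 2 ^ (m + 1) < δ) : Function.Injective (perturbedVal v ε) := by
  intro S T h
  rw [perturbedVal_eq, perturbedVal_eq] at h
  have hv : v S = v T := eq_of_abs_sub_le_abs_perturbation_sub hδ hε hεδ <| by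
    rw [abs_sub_comm (ε * _),
      show v S - v T = ε * perturbationWeight T - ε * perturbationWeight S by linarith]
  exact perturbationWeight_injective (mul_left_cancel₀ hε.ne' (by linarith))

lemma le_of_perturbedVal_le (hδ : ∀ S T, v S ≠ v T → δ ≤ |v S - v T|)
    (hε : 0 < ε) (hεδ : ε * 2 ^ (m + 1) < δ) {S T : Finset (Fin m)}
    (h : perturbedVal v ε S ≤ perturbedVal v ε T) : v S ≤ v T := by
  rw [perturbedVal_eq, perturbedVal_eq] at h
  refine le_of_not_gt fun hlt => hlt.ne' (eq_of_abs_sub_le_abs_perturbation_sub hδ hε hεδ ?_)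
  rw [abs_of_pos (sub_pos.2 hlt), abs_sub_comm]
  exact le_trans (by linarith) (le_abs_self _)

end

theorem perturbed_nondegenerate_and_efx_transfer_general
    {m n : ℕ} (v : Fin n → Finset (Fin m) → ℝ)
    (δ ε : ℝ)
    (hδ : ∀ (i : Fin n) (S T : Finset (Fin m)),
      v i S ≠ v i T → δ ≤ |v i S - v i T|)
    (hε : 0 < ε) (hεδ : ε * 2 ^ (m + 1) < δ) :
    (∀ (i : Fin n) (S T : Finset (Fin m)), S ≠ T →
      perturbedVal (v i) ε S ≠ perturbedVal (v i) ε T) ∧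
    (∀ X : Fin n → Finset (Fin m),
      (∀ i j : Fin n, i ≠ j → Disjoint (X i) (X j)) →
      (∀ g : Fin m, ∃ i : Fin n, g ∈ X i) →
      (∀ i j : Fin n, ∀ g ∈ X j,
        perturbedVal (v i) ε (X j \ {g}) ≤ perturbedVal (v i) ε (X i)) →
      (∀ i j : Fin n, ∀ g ∈ X j, v i (X j \ {g}) ≤ v i (X i))) :=
  ⟨fun i _ _ => (perturbedVal_injective (hδ i) hε hεδ).ne,
    fun _ _ _ hEFX i j g hg => le_of_perturbedVal_le (hδ i) hε hεδ (hEFX i j g hg)⟩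

/-- If `δ` bounds from below every nonzero gap `|vᵢ(S) − vᵢ(T)|` and
`ε · 2^(m+1) < δ`, then (1) the perturbed instance is non-degenerate, and
(2) every EFX allocation with respect to the perturbed valuations is an EFX
allocation with respect to the original valuations. -/
theorem perturbed_nondegenerate_and_efx_transfer
    {m n : ℕ} (v : Fin n → Finset (Fin m) → ℝ)
    (hnn : ∀ (i : Fin n) (S : Finset (Fin m)), 0 ≤ v i S)
    (δ ε : ℝ)
    (hδ : ∀ (i : Fin n) (S T : Finset (Fin m)),
      v i S ≠ v i T → δ ≤ |v i S - v i T|)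
    (hε : 0 < ε) (hεδ : ε * 2 ^ (m + 1) < δ) :
    (∀ (i : Fin n) (S T : Finset (Fin m)), S ≠ T →
      perturbedVal (v i) ε S ≠ perturbedVal (v i) ε T) ∧
    (∀ X : Fin n → Finset (Fin m),
      (∀ i j : Fin n, i ≠ j → Disjoint (X i) (X j)) →
      (∀ g : Fin m, ∃ i : Fin n, g ∈ X i) →
      (∀ i j : Fin n, ∀ g ∈ X j,
        perturbedVal (v i) ε (X j \ {g}) ≤ perturbedVal (v i) ε (X i)) →
      (∀ i j : Fin n, ∀ g ∈ X j, v i (X j \ {g}) ≤ v i (X i))) :=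
  perturbed_nondegenerate_and_efx_transfer_general v δ ε hδ hε hεδ
end

section
/- Let M be a finite set of goods, let v_2, v_3 : 2^M → ℝ_{≥0} be monotone valuations each of which is injective on subsets of M (non-degeneracy), and let (X_1, X_2, X_3) be a partition of M with X_3 nonempty. Suppose that for each i ∈ {2,3}, neither X_1 nor X_2 is EFX-feasible for agent i with respect to (X_1, X_2, X_3), and let g_i ∈ X_3 satisfy v_i(X_3 \ {g_i}) ≥ v_i(X_3 \ {h}) for all h ∈ X_3. Then for each i ∈ {2,3}, v_i(X_3 \ {g_i}) > max(v_i(X_1), v_i(X_2)). -/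
/-!
If `X k` (for `k` one of the first two bundles) is not EFX-feasible, some `X j \ {h}` is worth
more than `X k`. By monotonicity `j ≠ k`; if `j` is the other of the first two bundles the witness
is worth at most `X j`, and if `j` is the third bundle it is worth at most `X 2 \ {g}`. So each of
`v (X 0)`, `v (X 1)` lies strictly below the maximum of the other one and `v (X 2 \ {g})`, which
forces both below `v (X 2 \ {g})`.
-/

/-- Bundle `X k` is EFX-feasible for an agent with valuation `v` with respect to
the partition `X = (X 0, X 1, X 2)`. -/
def EFXFeasibleBundle {α : Type*} [DecidableEq α]
    (v : Finset α → ℝ) (X : Fin 3 → Finset α) (k : Fin 3) : Prop :=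
  ∀ j : Fin 3, ∀ g ∈ X j, v (X j \ {g}) ≤ v (X k)

theorem max_lt_of_lt_max_of_lt_max {β : Type*} [LinearOrder β] {a b c : β}
    (ha : a < max b c) (hb : b < max a c) : max a b < c := by
  rcases lt_max_iff.mp ha with hab | hac <;> rcases lt_max_iff.mp hb with hba | hbc
  · exact absurd hab hba.not_gt
  · exact max_lt (hab.trans hbc) hbc
  · exact max_lt hac (hba.trans hac)
  · exact max_lt hac hbc

theorem lt_max_of_not_efxFeasibleBundle {α : Type*} [DecidableEq α] {v : Finset α → ℝ}
    {X : Fin 3 → Finset α} {k k' : Fin 3} {b : ℝ} (hcover : ∀ j, j = k ∨ j = k' ∨ j = 2)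
    (hmono : ∀ j h, v (X j \ {h}) ≤ v (X j)) (hbest : ∀ h ∈ X 2, v (X 2 \ {h}) ≤ b)
    (hk : ¬ EFXFeasibleBundle v X k) : v (X k) < max (v (X k')) b := by
  simp only [EFXFeasibleBundle, not_forall, not_le] at hk
  obtain ⟨j, h, hh, hlt⟩ := hk
  rcases hcover j with rfl | rfl | rfl
  · exact absurd hlt (hmono j h).not_gt
  · exact lt_max_of_lt_left (hlt.trans_le (hmono j h))
  · exact lt_max_of_lt_right (hlt.trans_le (hbest h hh))

theorem best_subbundle_beats_X1_X2_general
    {α : Type*} [DecidableEq α] (M : Finset α) (v : Fin 2 → Finset α → ℝ)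
    (hmono : ∀ (i : Fin 2) (S T : Finset α), S ⊆ T → T ⊆ M → v i S ≤ v i T)
    (X : Fin 3 → Finset α)
    (hsub : ∀ j, X j ⊆ M)
    (g : Fin 2 → α)
    (hgmax : ∀ i : Fin 2, ∀ h ∈ X 2, v i (X 2 \ {h}) ≤ v i (X 2 \ {g i}))
    (hnotfeas : ∀ i : Fin 2,
      ¬ EFXFeasibleBundle (v i) X 0 ∧ ¬ EFXFeasibleBundle (v i) X 1) :
    ∀ i : Fin 2, max (v i (X 0)) (v i (X 1)) < v i (X 2 \ {g i}) := by
  intro i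
  have hmono_bundle : ∀ j h, v i (X j \ {h}) ≤ v i (X j) := fun j _ =>
    hmono i _ _ Finset.sdiff_subset (hsub j)
  exact max_lt_of_lt_max_of_lt_max
    (lt_max_of_not_efxFeasibleBundle (by decide) hmono_bundle (hgmax i) (hnotfeas i).1)
    (lt_max_of_not_efxFeasibleBundle (by decide) hmono_bundle (hgmax i) (hnotfeas i).2)

/-- Observation: if for each of the two agents (with monotone, nonnegative,
non-degenerate valuations `v 0`, `v 1`) neither `X₁` nor `X₂` is EFX-feasible,
and `g i ∈ X₃` maximizes `v i (X₃ \ {·})`, then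
`v i (X₃ \ {g i}) > max (v i X₁) (v i X₂)` for each agent `i`. -/
theorem best_subbundle_beats_X1_X2
    {α : Type*} [DecidableEq α] (M : Finset α) (v : Fin 2 → Finset α → ℝ)
    (hnn : ∀ (i : Fin 2) (S : Finset α), S ⊆ M → 0 ≤ v i S)
    (hmono : ∀ (i : Fin 2) (S T : Finset α), S ⊆ T → T ⊆ M → v i S ≤ v i T)
    (hinj : ∀ (i : Fin 2) (S T : Finset α), S ⊆ M → T ⊆ M → v i S = v i T → S = T)
    (X : Fin 3 → Finset α)
    (hsub : ∀ j, X j ⊆ M)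
    (hdisj : ∀ j j', j ≠ j' → Disjoint (X j) (X j'))
    (hunion : X 0 ∪ X 1 ∪ X 2 = M)
    (hX3ne : (X 2).Nonempty)
    (g : Fin 2 → α)
    (hg : ∀ i, g i ∈ X 2)
    (hgmax : ∀ i : Fin 2, ∀ h ∈ X 2, v i (X 2 \ {h}) ≤ v i (X 2 \ {g i}))
    (hnotfeas : ∀ i : Fin 2,
      ¬ EFXFeasibleBundle (v i) X 0 ∧ ¬ EFXFeasibleBundle (v i) X 1) :
    ∀ i : Fin 2, max (v i (X 0)) (v i (X 1)) < v i (X 2 \ {g i}) :=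
  best_subbundle_beats_X1_X2_general M v hmono X hsub g hgmax hnotfeas
end

section
/- Let M be a finite set of goods and let v_1 : 2^M → ℝ_{≥0} be a monotone valuation that is injective on subsets of M. Let X_1, X_2 ⊆ M be disjoint and let g_2 ∈ M \ (X_1 ∪ X_2). Suppose v_1(X_1) > v_1(X_2 \ {g}) for all g ∈ X_2, and v_1(X_2) > v_1(X_1). Let X'_1 ⊆ X_1 ∪ {g_2} be inclusion-minimal among subsets of X_1 ∪ {g_2} whose v_1-value exceeds v_1(X_1), i.e., v_1(X'_1) > v_1(X_1) and v_1(T) < v_1(X_1) for every proper subset T ⊊ X'_1, and let X'_2 = X_2. Then v_1(X'_1) > v_1(X'_2 \ {g}) for all g ∈ X'_2, and v_1(X'_2) > v_1(X'_1 \ {h}) for all h ∈ X'_1. -/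
theorem minimal_augmented_bundle_mutual_efx_general
    {α : Type*} [DecidableEq α] (v : Finset α → ℝ)
    (X₁ X₂ : Finset α)
    (h1 : ∀ g ∈ X₂, v (X₂ \ {g}) < v X₁)
    (h2 : v X₁ < v X₂)
    (X₁' : Finset α)
    (hval : v X₁ < v X₁')
    (hmin : ∀ T : Finset α, T ⊂ X₁' → v T < v X₁) :
    (∀ g ∈ X₂, v (X₂ \ {g}) < v X₁') ∧
    (∀ h ∈ X₁', v (X₁' \ {h}) < v X₂) := by
  refine ⟨fun g hg => (h1 g hg).trans hval, fun h hh => ?_⟩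
  have hssub : X₁' \ {h} ⊂ X₁' := by
    simpa only [Finset.sdiff_singleton_eq_erase] using Finset.erase_ssubset hh
  exact (hmin _ hssub).trans h2

/-- Observation: with a monotone, nonnegative, non-degenerate valuation `v`,
if `v X₁ > v (X₂ \ {g})` for all `g ∈ X₂`, `v X₂ > v X₁`, and `X₁'` is an
inclusion-minimal subset of `X₁ ∪ {g₂}` with `v X₁' > v X₁`, then
`v X₁' > v (X₂ \ {g})` for all `g ∈ X₂` and `v X₂ > v (X₁' \ {h})` for all
`h ∈ X₁'`. -/
theorem minimal_augmented_bundle_mutual_efx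
    {α : Type*} [DecidableEq α] (M : Finset α) (v : Finset α → ℝ)
    (hnn : ∀ S : Finset α, S ⊆ M → 0 ≤ v S)
    (hmono : ∀ S T : Finset α, S ⊆ T → T ⊆ M → v S ≤ v T)
    (hinj : ∀ S T : Finset α, S ⊆ M → T ⊆ M → v S = v T → S = T)
    (X₁ X₂ : Finset α) (hX₁ : X₁ ⊆ M) (hX₂ : X₂ ⊆ M)
    (hdisj : Disjoint X₁ X₂)
    (g₂ : α) (hg₂M : g₂ ∈ M) (hg₂ : g₂ ∉ X₁ ∪ X₂)
    (h1 : ∀ g ∈ X₂, v (X₂ \ {g}) < v X₁)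
    (h2 : v X₁ < v X₂)
    (X₁' : Finset α) (hsub : X₁' ⊆ insert g₂ X₁)
    (hval : v X₁ < v X₁')
    (hmin : ∀ T : Finset α, T ⊂ X₁' → v T < v X₁) :
    (∀ g ∈ X₂, v (X₂ \ {g}) < v X₁') ∧
    (∀ h ∈ X₁', v (X₁' \ {h}) < v X₂) :=
  minimal_augmented_bundle_mutual_efx_general v X₁ X₂ h1 h2 X₁' hval hmin
end

section
/- Let M be a finite set of goods and let v_2, v_3 : 2^M → ℝ_{≥0} be monotone valuations with v_3 MMS-feasible and with each of v_2, v_3 injective on subsets of M. Let (X_1, X_2, X_3) be a partition of M, let g_2, g_3 ∈ X_3, and suppose: v_2(X_1 ∪ {g_2}) > v_2(X_3 \ {g_2}) > v_2(X_2); v_3(X_1 ∪ {g_3}) > v_3(X_2) and v_3(X_3 \ {g_3}) > v_3(X_2). Let (Y_2, Y_3) be a partition of X_1 ∪ X_3 such that: v_2(Y_2) > v_2(Y_3 \ {h}) for all h ∈ Y_3; min(v_2(Y_2), v_2(Y_3)) ≥ min(v_2(X_1 ∪ {g_2}), v_2(X_3 \ {g_2})); and v_3(Y_3) ≥ v_3(Y_2).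 Then in the partition (X_2, Y_2, Y_3) of M, the bundle Y_2 is EFX-feasible for agent 2 and the bundle Y_3 is EFX-feasible for agent 3; that is, v_2(Y_2) ≥ v_2(B \ {g}) and v_3(Y_3) ≥ v_3(B \ {g}) for every bundle B ∈ {X_2, Y_2, Y_3} and every g ∈ B. -/
open Finset

lemma apply_sdiff_singleton_le {α : Type*} [DecidableEq α] {M B : Finset α}
    {v : Finset α → ℝ} {c : ℝ} (hmono : ∀ S T : Finset α, S ⊆ T → T ⊆ M → v S ≤ v T)
    (hB : B ⊆ M) (hle : v B ≤ c) (g : α) : v (B \ {g}) ≤ c :=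
  (hmono _ _ sdiff_subset hB).trans hle

lemma MMSFeasible.min_le_of_le {α : Type*} [DecidableEq α] {M : Finset α}
    {v : Finset α → ℝ} (hv : MMSFeasible M v) {S A₁ A₂ B₁ B₂ : Finset α} (hS : S ⊆ M)
    (hA : Disjoint A₁ A₂) (hAS : A₁ ∪ A₂ = S) (hB : Disjoint B₁ B₂) (hBS : B₁ ∪ B₂ = S)
    (hle : v B₁ ≤ v B₂) : min (v A₁) (v A₂) ≤ v B₂ :=
  max_eq_right hle ▸ hv S hS A₁ A₂ B₁ B₂ hA hAS hB hBS

lemma Finset.disjoint_insert_sdiff_singleton {α : Type*} [DecidableEq α] {s t : Finset α}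
    (h : Disjoint s t) (a : α) : Disjoint (insert a s) (t \ {a}) := by
  rw [disjoint_insert_left]
  exact ⟨by simp, h.mono_right sdiff_subset⟩

lemma Finset.insert_union_sdiff_singleton {α : Type*} [DecidableEq α] {a : α} {t : Finset α}
    (ha : a ∈ t) (s : Finset α) : insert a s ∪ (t \ {a}) = s ∪ t := by
  rw [insert_union, ← union_insert, sdiff_singleton_eq_erase, insert_erase ha]

theorem Y2_Y3_efx_feasible_general
    {α : Type*} [DecidableEq α] (M : Finset α) (v₂ v₃ : Finset α → ℝ)
    (hmono₂ : ∀ S T : Finset α, S ⊆ T → T ⊆ M → v₂ S ≤ v₂ T)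
    (hmono₃ : ∀ S T : Finset α, S ⊆ T → T ⊆ M → v₃ S ≤ v₃ T)
    (hmms₃ : MMSFeasible M v₃)
    (X₁ X₂ X₃ : Finset α)
    (hd13 : Disjoint X₁ X₃)
    (hXu : X₁ ∪ X₂ ∪ X₃ = M)
    (g₂ : α) (g₃ : α) (hg₃ : g₃ ∈ X₃)
    (h2a : v₂ (X₃ \ {g₂}) < v₂ (insert g₂ X₁))
    (h2b : v₂ X₂ < v₂ (X₃ \ {g₂}))
    (h3a : v₃ X₂ < v₃ (insert g₃ X₁))
    (h3b : v₃ X₂ < v₃ (X₃ \ {g₃}))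
    (Y₂ Y₃ : Finset α) (hYd : Disjoint Y₂ Y₃) (hYu : Y₂ ∪ Y₃ = X₁ ∪ X₃)
    (hPR : ∀ h ∈ Y₃, v₂ (Y₃ \ {h}) < v₂ Y₂)
    (hPRmin : min (v₂ (insert g₂ X₁)) (v₂ (X₃ \ {g₂})) ≤ min (v₂ Y₂) (v₂ Y₃))
    (hpick : v₃ Y₂ ≤ v₃ Y₃) :
    ∀ B : Finset α, (B = X₂ ∨ B = Y₂ ∨ B = Y₃) →
      ∀ g ∈ B, v₂ (B \ {g}) ≤ v₂ Y₂ ∧ v₃ (B \ {g}) ≤ v₃ Y₃ := by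
  have hX₁₃M : X₁ ∪ X₃ ⊆ M := hXu ▸ union_subset_union_left subset_union_left
  have hX₂M : X₂ ⊆ M := hXu ▸ subset_union_left.trans' subset_union_right
  have hY₂M : Y₂ ⊆ M := (hYu ▸ subset_union_left).trans hX₁₃M
  have hY₃M : Y₃ ⊆ M := (hYu ▸ subset_union_right).trans hX₁₃M
  have hX₂Y₂ : v₂ X₂ ≤ v₂ Y₂ :=
    calc v₂ X₂ ≤ v₂ (X₃ \ {g₂}) := h2b.le
      _ = min (v₂ (insert g₂ X₁)) (v₂ (X₃ \ {g₂})) := (min_eq_right h2a.le).symm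
      _ ≤ v₂ Y₂ := hPRmin.trans (min_le_left _ _)
  have hX₂Y₃ : v₃ X₂ ≤ v₃ Y₃ :=
    (le_min h3a.le h3b.le).trans <| hmms₃.min_le_of_le hX₁₃M
      (disjoint_insert_sdiff_singleton hd13 g₃) (insert_union_sdiff_singleton hg₃ X₁)
      hYd hYu hpick
  rintro B (rfl | rfl | rfl) g hg
  · exact ⟨apply_sdiff_singleton_le hmono₂ hX₂M hX₂Y₂ g,
      apply_sdiff_singleton_le hmono₃ hX₂M hX₂Y₃ g⟩
  · exact ⟨apply_sdiff_singleton_le hmono₂ hY₂M le_rfl g,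
      apply_sdiff_singleton_le hmono₃ hY₂M hpick g⟩
  · exact ⟨(hPR g hg).le, apply_sdiff_singleton_le hmono₃ hY₃M le_rfl g⟩

/-- Observation: under the stated hypotheses, in the partition `(X₂, Y₂, Y₃)`
of `M`, bundle `Y₂` is EFX-feasible for agent 2 and bundle `Y₃` is EFX-feasible
for agent 3. -/
theorem Y2_Y3_efx_feasible
    {α : Type*} [DecidableEq α] (M : Finset α) (v₂ v₃ : Finset α → ℝ)
    (hnn₂ : ∀ S : Finset α, S ⊆ M → 0 ≤ v₂ S)
    (hnn₃ : ∀ S : Finset α, S ⊆ M → 0 ≤ v₃ S)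
    (hmono₂ : ∀ S T : Finset α, S ⊆ T → T ⊆ M → v₂ S ≤ v₂ T)
    (hmono₃ : ∀ S T : Finset α, S ⊆ T → T ⊆ M → v₃ S ≤ v₃ T)
    (hmms₃ : MMSFeasible M v₃)
    (hinj₂ : ∀ S T : Finset α, S ⊆ M → T ⊆ M → v₂ S = v₂ T → S = T)
    (hinj₃ : ∀ S T : Finset α, S ⊆ M → T ⊆ M → v₃ S = v₃ T → S = T)
    (X₁ X₂ X₃ : Finset α)
    (hd12 : Disjoint X₁ X₂) (hd13 : Disjoint X₁ X₃) (hd23 : Disjoint X₂ X₃)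
    (hXu : X₁ ∪ X₂ ∪ X₃ = M)
    (g₂ : α) (hg₂ : g₂ ∈ X₃) (g₃ : α) (hg₃ : g₃ ∈ X₃)
    (h2a : v₂ (X₃ \ {g₂}) < v₂ (insert g₂ X₁))
    (h2b : v₂ X₂ < v₂ (X₃ \ {g₂}))
    (h3a : v₃ X₂ < v₃ (insert g₃ X₁))
    (h3b : v₃ X₂ < v₃ (X₃ \ {g₃}))
    (Y₂ Y₃ : Finset α) (hYd : Disjoint Y₂ Y₃) (hYu : Y₂ ∪ Y₃ = X₁ ∪ X₃)
    (hPR : ∀ h ∈ Y₃, v₂ (Y₃ \ {h}) < v₂ Y₂)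
    (hPRmin : min (v₂ (insert g₂ X₁)) (v₂ (X₃ \ {g₂})) ≤ min (v₂ Y₂) (v₂ Y₃))
    (hpick : v₃ Y₂ ≤ v₃ Y₃) :
    ∀ B : Finset α, (B = X₂ ∨ B = Y₂ ∨ B = Y₃) →
      ∀ g ∈ B, v₂ (B \ {g}) ≤ v₂ Y₂ ∧ v₃ (B \ {g}) ≤ v₃ Y₃ :=
  Y2_Y3_efx_feasible_general M v₂ v₃ hmono₂ hmono₃ hmms₃ X₁ X₂ X₃ hd13 hXu g₂ g₃ hg₃ h2a h2b h3a h3b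
    Y₂ Y₃ hYd hYu hPR hPRmin hpick
end
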